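/- arXiv:0907.5565 — 3 statements merged into one kernel-verified Lean document; each statement's English description precedes it below -/
import Mathlib

section
/- If a quaternionic power series f(q) = Σₙ qⁿ aₙ converges on the ball B(0,R), then for every imaginary unit I ∈ S the restriction of f to B(0,R) ∩ L_I satisfies the Cauchy–Riemann equation (∂/∂x + I ∂/∂y) f(x + yI) = 0. -/
noncomputable section

abbrev H := Quaternion ℝ

/-- The sphere of quaternion imaginary units. -/
def Sph : Set H := {q : H | q ^ 2 = -1}

/-- The complex line (Slice) through 1 and `I`. -/
def Slice (I : H) : Set H := {q : H | ∃ x y : ℝ, q = (x : H) + y • I}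

/-- The 2-sphere `x + y𝕊`. -/
def sphSet (x y : ℝ) : Set H := {q : H | ∃ I ∈ Sph, q = (x : H) + y • I}

/-- The real axis inside the quaternions. -/
def realAxis : Set H := {q : H | ∃ r : ℝ, q = (r : H)}

/-- `f` is holomorphic on the `I`-Slice of `Ω`: at every point of `Ω ∩ L_I` the
map `(x,y) ↦ f(x+yI)` is (real) differentiable and satisfies the
Cauchy–Riemann equation `∂f/∂x + I ∂f/∂y = 0`. -/
def HoloSlice (Ω : Set H) (f : H → H) (I : H) : Prop :=
  ∀ x y : ℝ, (x : H) + y • I ∈ Ω →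
    DifferentiableAt ℝ (fun p : ℝ × ℝ => f ((p.1 : H) + p.2 • I)) (x, y) ∧
    fderiv ℝ (fun p : ℝ × ℝ => f ((p.1 : H) + p.2 • I)) (x, y) (1, 0)
      + I * fderiv ℝ (fun p : ℝ × ℝ => f ((p.1 : H) + p.2 • I)) (x, y) (0, 1) = 0

/-- Slice regular functions: every Slice restriction is holomorphic. -/
def SliceRegular (Ω : Set H) (f : H → H) : Prop :=
  ∀ I ∈ Sph, HoloSlice Ω f I

/-- A Slice domain: a domain intersecting the real axis whose slices are domains. -/
def IsSliceDomain (Ω : Set H) : Prop :=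
  IsOpen Ω ∧ IsConnected Ω ∧ (Ω ∩ realAxis).Nonempty ∧
  ∀ I ∈ Sph, IsConnected (Ω ∩ Slice I)

/-- Axially symmetric set. -/
def AxSymm (C : Set H) : Prop :=
  ∀ (x y : ℝ), ∀ I ∈ Sph, (x : H) + y • I ∈ C → ∀ J ∈ Sph, (x : H) + y • J ∈ C

/-- Symmetric Slice domain. -/
def IsSymmSliceDomain (Ω : Set H) : Prop := IsSliceDomain Ω ∧ AxSymm Ω

/-- Orthogonality of quaternions w.r.t. the Euclidean inner product `re (p * star q)`. -/
def Orth (I J : H) : Prop := (I * star J).re = 0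

/-- `F, G` give a splitting `f = F + G J` of `f` on the Slice `Ω ∩ L_I`,
with `F, G` holomorphic and `L_I`-valued. -/
structure IsSplitting (Ω : Set H) (f : H → H) (I J : H) (F G : H → H) : Prop where
  mapsF : ∀ q ∈ Ω ∩ Slice I, F q ∈ Slice I
  mapsG : ∀ q ∈ Ω ∩ Slice I, G q ∈ Slice I
  holoF : HoloSlice Ω F I
  holoG : HoloSlice Ω G I
  eq : ∀ q ∈ Ω ∩ Slice I, f q = F q + G q * J

/-- `h` is the regular product `f * g`: it is Slice regular and restricts on some
Slice `L_I` (with `I ⊥ J`, splittings `f = F + GJ`, `g = F' + G'J`) to the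
product formula.  (Note `star` is quaternionic conjugation, which restricts to
complex conjugation on each Slice.) -/
def IsRegularProduct (Ω : Set H) (f g h : H → H) : Prop :=
  SliceRegular Ω h ∧
  ∃ I ∈ Sph, ∃ J ∈ Sph, Orth I J ∧
    ∃ F G F' G' : H → H, IsSplitting Ω f I J F G ∧ IsSplitting Ω g I J F' G' ∧
      ∀ q ∈ Ω ∩ Slice I,
        h q = (F q * F' q - G q * star (G' (star q)))
            + (F q * G' q + G q * star (F' (star q))) * J

/-- `fc` is the regular conjugate of `f`. -/
def IsRegularConj (Ω : Set H) (f fc : H → H) : Prop :=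
  SliceRegular Ω fc ∧
  ∃ I ∈ Sph, ∃ J ∈ Sph, Orth I J ∧
    ∃ F G : H → H, IsSplitting Ω f I J F G ∧
      ∀ q ∈ Ω ∩ Slice I, fc q = star (F (star q)) - G q * J

/-- `fs` is the symmetrization `f^s = f * f^c` of `f`. -/
def IsSymmetrization (Ω : Set H) (f fs : H → H) : Prop :=
  ∃ fc : H → H, IsRegularConj Ω f fc ∧ IsRegularProduct Ω f fc fs

/-- The degenerate set of `f`: union of the spheres `x + y𝕊` (`y ≠ 0`)
contained in `Ω` on which `f` is constant. -/
def DegSet (Ω : Set H) (f : H → H) : Set H :=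
  {q : H | ∃ x y : ℝ, y ≠ 0 ∧ q ∈ sphSet x y ∧ sphSet x y ⊆ Ω ∧
    ∀ p ∈ sphSet x y, ∀ p' ∈ sphSet x y, f p = f p'}

/-! On the slice `L_I` the series is a power series in the single variable `z = x + yI`, and
`z` commutes with `I`. Hence the derivative of `(x, y) ↦ zⁿ aₙ` in the direction `v` is
`n zⁿ⁻¹ L(v) aₙ` (with `L(1,0) = 1`, `L(0,1) = I`), and each term satisfies the Cauchy–Riemann
equation because `I² = -1`. Convergence at a real point `ρ < R` bounds `‖aₙ‖ ρⁿ`, which gives a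
summable bound for the termwise derivatives near every point of the slice; so the series may be
differentiated termwise, and the Cauchy–Riemann operator, being continuous and linear, commutes
with the sum. -/

open scoped RightActions

section PowMulFDeriv

variable {𝕜 E A : Type*} [NontriviallyNormedField 𝕜] [NormedAddCommGroup E] [NormedSpace 𝕜 E]
  [NormedRing A] [NormedAlgebra 𝕜 A]

def powMulFDeriv (L : E →L[𝕜] A) (a : A) (n : ℕ) (p : E) : E →L[𝕜] A :=
  (n • (ContinuousLinearMap.mul 𝕜 A (L p ^ (n - 1))).comp L) <• a

@[simp]
theorem powMulFDeriv_apply (L : E →L[𝕜] A) (a : A) (n : ℕ) (p v : E) :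
    powMulFDeriv L a n p v = n • (L p ^ (n - 1) * L v * a) := by
  simp [powMulFDeriv, mul_assoc]

theorem hasFDerivAt_pow_mul_of_commute {L : E →L[𝕜] A} {p : E} (hL : ∀ v, Commute (L v) (L p))
    (a : A) (n : ℕ) : HasFDerivAt (fun q => L q ^ n * a) (powMulFDeriv L a n p) p := by
  refine ((L.hasFDerivAt.pow' n).mul_const' a).congr_fderiv ?_
  ext v
  have hterm : ∀ i ∈ Finset.range n, L p ^ (n - 1 - i) * L v * L p ^ i = L p ^ (n - 1) * L v := by
    intro i hi
    rw [mul_assoc, ((hL v).pow_right i).eq, ← mul_assoc, ← pow_add,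
      Nat.sub_add_cancel (by simp at hi; omega)]
  simp only [sum_apply, smul_apply, MulOpposite.op_pow,
    MulOpposite.smul_eq_mul_unop, MulOpposite.unop_pow, MulOpposite.unop_op, smul_eq_mul,
    Nat.pred_eq_sub_one, powMulFDeriv_apply]
  rw [Finset.sum_congr rfl hterm, Finset.sum_const, Finset.card_range, smul_mul_assoc]

theorem norm_powMulFDeriv_le [NormOneClass A] (L : E →L[𝕜] A) (a : A) (n : ℕ) (p : E) :
    ‖powMulFDeriv L a n p‖ ≤ n * ‖L p‖ ^ (n - 1) * ‖L‖ * ‖a‖ := by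
  refine ContinuousLinearMap.opNorm_le_bound _ (by positivity) fun v => ?_
  rw [powMulFDeriv_apply]
  calc ‖n • (L p ^ (n - 1) * L v * a)‖ ≤ n * (‖L p‖ ^ (n - 1) * (‖L‖ * ‖v‖) * ‖a‖) := by
        refine (norm_nsmul_le ..).trans ?_
        gcongr
        exact (norm_mul₃_le ..).trans (by gcongr; exacts [norm_pow_le _ _, L.le_opNorm v])
    _ = _ := by ring

end PowMulFDeriv

theorem summable_nat_mul_pow_mul_norm {F : Type*} [SeminormedAddCommGroup F] {a : ℕ → F}
    {C ρ r : ℝ} (ha : ∀ n, ‖a n‖ * ρ ^ n ≤ C) (hr : 0 < r) (hrρ : r < ρ) :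
    Summable fun n : ℕ => n * r ^ (n - 1) * ‖a n‖ := by
  have hρ : 0 < ρ := hr.trans hrρ
  have hq : ‖r / ρ‖ < 1 := by
    rw [Real.norm_of_nonneg (by positivity), div_lt_one hρ]
    exact hrρ
  refine Summable.of_nonneg_of_le (fun n => by positivity) (fun n => ?_)
    ((summable_pow_mul_geometric_of_norm_lt_one 1 hq).mul_left (C / r))
  rcases n with _ | n
  · simp
  · have han : ‖a (n + 1)‖ ≤ C / ρ ^ (n + 1) := (le_div_iff₀ (by positivity)).2 (ha _)
    calc ((n + 1 : ℕ) : ℝ) * r ^ (n + 1 - 1) * ‖a (n + 1)‖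
        ≤ (n + 1 : ℕ) * r ^ n * (C / ρ ^ (n + 1)) := by rw [Nat.add_sub_cancel]; gcongr
      _ = C / r * (((n + 1 : ℕ) : ℝ) ^ 1 * (r / ρ) ^ (n + 1)) := by
        rw [div_pow, pow_one, pow_succ r]
        field_simp

theorem exists_hasSum_powMulFDeriv_hasFDerivAt_tsum {E A : Type*} [NormedAddCommGroup E]
    [NormedSpace ℝ E] [NormedRing A] [NormedAlgebra ℝ A] [NormOneClass A] [CompleteSpace A]
    {L : E →L[ℝ] A} (hL : ∀ u v, Commute (L u) (L v)) {a : ℕ → A} {C ρ : ℝ}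
    (ha : ∀ n, ‖a n‖ * ρ ^ n ≤ C) {p : E} (hp : ‖L p‖ < ρ) :
    ∃ D, HasSum (fun n => powMulFDeriv L (a n) n p) D ∧
      HasFDerivAt (fun q => ∑' n, L q ^ n * a n) D p := by
  obtain ⟨r, hpr, hrρ⟩ := exists_between hp
  have hr : 0 < r := (norm_nonneg _).trans_lt hpr
  set s := L ⁻¹' Metric.ball 0 r
  have hs_open : IsOpen s := Metric.isOpen_ball.preimage L.continuous
  have hs_conn : IsPreconnected s :=
    ((convex_ball (0 : A) r).linear_preimage L.toLinearMap).isPreconnected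
  have hu : Summable fun n : ℕ => n * r ^ (n - 1) * ‖L‖ * ‖a n‖ := by
    simpa only [mul_right_comm _ ‖L‖] using (summable_nat_mul_pow_mul_norm ha hr hrρ).mul_right ‖L‖
  have hbound (n : ℕ) (q : E) (hq : q ∈ s) :
      ‖powMulFDeriv L (a n) n q‖ ≤ n * r ^ (n - 1) * ‖L‖ * ‖a n‖ := by
    refine (norm_powMulFDeriv_le L (a n) n q).trans ?_
    gcongr
    exact (mem_ball_zero_iff.1 hq).le
  have hsum0 : Summable fun n => L 0 ^ n * a n :=
    (hasSum_single 0 fun n hn => by simp [hn]).summable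
  refine ⟨_, (Summable.of_norm_bounded hu fun n => hbound n p (mem_ball_zero_iff.2 hpr)).hasSum,
    hasFDerivAt_tsum_of_isPreconnected hu hs_open hs_conn
      (fun n q _ => hasFDerivAt_pow_mul_of_commute (fun v => hL v q) (a n) n) hbound
      (by simpa [s] using hr) hsum0 (mem_ball_zero_iff.2 hpr)⟩

def sliceCLM (I : H) : ℝ × ℝ →L[ℝ] H :=
  (ContinuousLinearMap.fst ℝ ℝ ℝ).smulRight 1 + (ContinuousLinearMap.snd ℝ ℝ ℝ).smulRight I

@[simp]
theorem sliceCLM_apply (I : H) (p : ℝ × ℝ) : sliceCLM I p = (p.1 : H) + p.2 • I := by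
  simp [sliceCLM, Algebra.smul_def]

theorem commute_sliceCLM (I : H) (p q : ℝ × ℝ) : Commute (sliceCLM I p) (sliceCLM I q) := by
  have hI : Commute I (sliceCLM I q) := by
    rw [sliceCLM_apply]
    exact (Quaternion.coe_commute _ _).symm.add_right ((Commute.refl I).smul_right _)
  rw [sliceCLM_apply]
  exact (Quaternion.coe_commute _ _).add_left (hI.smul_left _)

def cauchyRiemannCLM (I : H) : (ℝ × ℝ →L[ℝ] H) →L[ℝ] H :=
  ContinuousLinearMap.apply ℝ H (1, 0) +
    (ContinuousLinearMap.mul ℝ H I).comp (ContinuousLinearMap.apply ℝ H (0, 1))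

@[simp]
theorem cauchyRiemannCLM_apply (I : H) (D : ℝ × ℝ →L[ℝ] H) :
    cauchyRiemannCLM I D = D (1, 0) + I * D (0, 1) := rfl

theorem cauchyRiemannCLM_powMulFDeriv {I : H} (hI : I ∈ Sph) (a : H) (n : ℕ) (p : ℝ × ℝ) :
    cauchyRiemannCLM I (powMulFDeriv (sliceCLM I) a n p) = 0 := by
  have hII : I * I = -1 := by rw [← sq]; exact hI
  have hc : Commute I (sliceCLM I p ^ (n - 1)) := by
    simpa using (commute_sliceCLM I (0, 1) p).pow_right (n - 1)
  have h10 : sliceCLM I (1, 0) = 1 := by simp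
  have h01 : sliceCLM I (0, 1) = I := by simp
  rw [cauchyRiemannCLM_apply, powMulFDeriv_apply, powMulFDeriv_apply, h10, h01, mul_one,
    mul_smul_comm, ← mul_assoc, ← mul_assoc, hc.eq, mul_assoc _ I I, hII]
  simp

theorem exists_norm_mul_pow_le_of_summable {a : ℕ → H} {ρ : ℝ}
    (h : Summable fun n => (ρ : H) ^ n * a n) : ∃ C, ∀ n, ‖a n‖ * |ρ| ^ n ≤ C := by
  obtain ⟨C, hC⟩ := h.tendsto_atTop_zero.norm.bddAbove_range
  refine ⟨C, fun n => ?_⟩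
  simpa [mul_comm] using hC ⟨n, rfl⟩

/-- a quaternionic power series convergent on `B(0,R)` has
holomorphic restrictions (i.e. satisfies the Cauchy–Riemann equation) on
every slice. -/
theorem powerSeries_sliceHolomorphic (R : ℝ) (a : ℕ → H) (f : H → H)
    (hconv : ∀ q : H, ‖q‖ < R → HasSum (fun n : ℕ => q ^ n * a n) (f q)) :
    ∀ I ∈ Sph, HoloSlice (Metric.ball (0 : H) R) f I := by
  intro I hI x y hxy
  have hxyR : ‖sliceCLM I (x, y)‖ < R := by simpa using hxy
  obtain ⟨ρ, hxyρ, hρR⟩ := exists_between hxyR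
  have hρ : 0 ≤ ρ := (norm_nonneg _).trans hxyρ.le
  have hρR' : ‖(ρ : H)‖ < R := by simpa [abs_of_nonneg hρ]
  obtain ⟨C, hC⟩ := exists_norm_mul_pow_le_of_summable (hconv ρ hρR').summable
  rw [abs_of_nonneg hρ] at hC
  obtain ⟨D, hD, hDf⟩ := exists_hasSum_powMulFDeriv_hasFDerivAt_tsum (commute_sliceCLM I) hC hxyρ
  have hf : HasFDerivAt (fun p : ℝ × ℝ => f ((p.1 : H) + p.2 • I)) D (x, y) := by
    refine hDf.congr_of_eventuallyEq ?_
    filter_upwards [(isOpen_lt (sliceCLM I).continuous.norm continuous_const).mem_nhds hxyR]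
      with q hq
    rw [← sliceCLM_apply]
    exact (hconv _ hq).tsum_eq.symm
  refine ⟨hf.differentiableAt, ?_⟩
  rw [hf.fderiv, ← cauchyRiemannCLM_apply]
  have hCR := hD.mapL (cauchyRiemannCLM I)
  simp only [cauchyRiemannCLM_powMulFDeriv hI] at hCR
  exact hCR.unique hasSum_zero
end
end

section
/- Let Ω ⊆ ℍ be a symmetric slice domain and f : Ω → ℍ a slice regular function. Then for each sphere x + yS ⊂ Ω there exist quaternions b and c such that f(x + yI) = b + I c for all I ∈ S; i.e., the map I ↦ f(x+yI) is affine in I. -/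
noncomputable section

/-!
Fix an imaginary unit `I` and put `b(x, y) = (f(x + yI) + f(x - yI)) / 2`,
`c(x, y) = I (f(x - yI) - f(x + yI)) / 2`, so that `f(x + yI) = b + I c`. Holomorphy of `f` on
`L_I` makes `(b, c)` satisfy `∂_y b = -∂_x c`, `∂_y c = ∂_x b`, and this system says exactly
that `b + J c` is holomorphic on `L_J` for every `J ∈ 𝕊`, for the complex structure on `ℍ` given
by left multiplication by `J`. So `f(x + yJ)` and `b + J c` are holomorphic on the connected
slice `Ω ∩ L_J` and agree on the real axis; by the identity principle they agree everywhere.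
-/

open Topology Filter

lemma mul_self_of_mem_sph {J : H} (hJ : J ∈ Sph) : J * J = -1 := by
  rw [← sq]; exact hJ

lemma neg_mem_sph {J : H} (hJ : J ∈ Sph) : -J ∈ Sph := by
  rw [Sph, Set.mem_ofPred_eq, neg_sq]; exact hJ

lemma sph_nonempty : Sph.Nonempty := by
  let i : H := ⟨0, 1, 0, 0⟩
  refine ⟨i, ?_⟩
  change i ^ 2 = -1
  rw [sq]
  ext <;>
    simp only [Quaternion.re_mul, Quaternion.imI_mul, Quaternion.imJ_mul, Quaternion.imK_mul,
      Quaternion.re_neg, Quaternion.imI_neg, Quaternion.imJ_neg, Quaternion.imK_neg,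
      Quaternion.re_one, Quaternion.imI_one, Quaternion.imJ_one, Quaternion.imK_one] <;>
    simp [i]

lemma re_eq_zero_of_mem_sph {J : H} (hJ : J ∈ Sph) : J.re = 0 := by
  have h := mul_self_of_mem_sph hJ
  have h1 := congrArg QuaternionAlgebra.re h
  have h2 := congrArg QuaternionAlgebra.imI h
  have h3 := congrArg QuaternionAlgebra.imJ h
  have h4 := congrArg QuaternionAlgebra.imK h
  simp only [Quaternion.re_mul, Quaternion.imI_mul, Quaternion.imJ_mul, Quaternion.imK_mul,
    Quaternion.re_neg, Quaternion.imI_neg, Quaternion.imJ_neg, Quaternion.imK_neg,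
    Quaternion.re_one, Quaternion.imI_one, Quaternion.imJ_one, Quaternion.imK_one] at h1 h2 h3 h4
  -- the imaginary part of `J * J` is `2 J.re • J.im`, so `J.re ≠ 0` would force `J.re ^ 2 = -1`
  nlinarith [sq_nonneg J.re, sq_nonneg J.imI, sq_nonneg J.imJ, sq_nonneg J.imK]

def sliceEmb {J : H} (hJ : J ∈ Sph) : ℂ →ₐ[ℝ] H :=
  Complex.liftAux J (mul_self_of_mem_sph hJ)

lemma sliceEmb_apply {J : H} (hJ : J ∈ Sph) (z : ℂ) : sliceEmb hJ z = (z.re : H) + z.im • J :=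
  rfl

lemma star_sliceEmb {J : H} (hJ : J ∈ Sph) (z : ℂ) :
    star (sliceEmb hJ z) = sliceEmb hJ ((starRingEnd ℂ) z) := by
  have hJstar : star J = -J := Quaternion.star_eq_neg.mpr (re_eq_zero_of_mem_sph hJ)
  simp [sliceEmb_apply, hJstar]

lemma norm_sliceEmb {J : H} (hJ : J ∈ Sph) (z : ℂ) : ‖sliceEmb hJ z‖ = ‖z‖ := by
  have h : Quaternion.normSq (sliceEmb hJ z) = Complex.normSq z := by
    rw [Quaternion.normSq_def, star_sliceEmb, ← map_mul, Complex.mul_conj]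
    simp
  rw [Quaternion.normSq_eq_norm_mul_self, Complex.normSq_eq_norm_sq, sq] at h
  exact (mul_self_inj (norm_nonneg _) (norm_nonneg _)).mp h

section SliceComplexStructure

variable {J : H} (hJ : J ∈ Sph)

/-- `H` as a complex vector space, `z ∈ ℂ` acting by left multiplication by `sliceEmb hJ z`. -/
abbrev sliceModule : Module ℂ H := Module.compHom H (sliceEmb hJ).toRingHom

abbrev sliceNormedSpace : NormedSpace ℂ H :=
  { sliceModule hJ with
    norm_smul_le := fun z q => by
      change ‖sliceEmb hJ z * q‖ ≤ ‖z‖ * ‖q‖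
      rw [norm_mul, norm_sliceEmb] }

lemma sliceScalarTower : letI := sliceModule hJ; IsScalarTower ℝ ℂ H := by
  let _ := sliceModule hJ
  refine ⟨fun r z q => ?_⟩
  change sliceEmb hJ (r • z) * q = r • (sliceEmb hJ z * q)
  rw [map_smul, smul_mul_assoc]

end SliceComplexStructure

/-- `g` satisfies the Cauchy–Riemann equation of the complex structure "left multiplication by
`J`" at `p`. -/
def SliceHolomorphicAt (J : H) (g : ℝ × ℝ → H) (p : ℝ × ℝ) : Prop :=
  ∃ D : ℝ × ℝ →L[ℝ] H, HasFDerivAt g D p ∧ D (0, 1) = J * D (1, 0)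

lemma SliceHolomorphicAt.sub {J : H} {g₁ g₂ : ℝ × ℝ → H} {p : ℝ × ℝ}
    (h₁ : SliceHolomorphicAt J g₁ p) (h₂ : SliceHolomorphicAt J g₂ p) :
    SliceHolomorphicAt J (g₁ - g₂) p := by
  obtain ⟨D₁, hD₁, hCR₁⟩ := h₁
  obtain ⟨D₂, hD₂, hCR₂⟩ := h₂
  exact ⟨D₁ - D₂, hD₁.sub hD₂, by simp [hCR₁, hCR₂, mul_sub]⟩

lemma SliceHolomorphicAt.differentiableAt {J : H} (hJ : J ∈ Sph) {g : ℝ × ℝ → H} {z : ℂ}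
    (hg : SliceHolomorphicAt J g (z.re, z.im)) :
    letI := sliceNormedSpace hJ
    DifferentiableAt ℂ (fun w : ℂ => g (w.re, w.im)) z := by
  let _ := sliceNormedSpace hJ
  have := sliceScalarTower hJ
  obtain ⟨D, hD, hCR⟩ := hg
  have hR : HasFDerivAt (fun w : ℂ => g (w.re, w.im))
      (D.comp (Complex.equivRealProdCLM : ℂ →L[ℝ] ℝ × ℝ)) z :=
    hD.comp z Complex.equivRealProdCLM.hasFDerivAt
  refine (hasFDerivAt_of_restrictScalars ℝ hR (f' := .toSpanSingleton ℂ (D (1, 0))) ?_)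
    |>.differentiableAt
  refine ContinuousLinearMap.ext fun w => ?_
  have hw : (Complex.equivRealProdCLM w : ℝ × ℝ) = w.re • (1, 0) + w.im • (0, 1) := by
    simp
  change sliceEmb hJ w * D (1, 0) = D (Complex.equivRealProdCLM w)
  rw [hw, map_add, map_smul, map_smul, hCR, sliceEmb_apply, add_mul, smul_mul_assoc,
    Quaternion.coe_mul_eq_smul]

lemma range_sliceEmb {J : H} (hJ : J ∈ Sph) : Set.range (sliceEmb hJ) = Slice J := by
  ext q
  constructor
  · rintro ⟨z, rfl⟩
    exact ⟨z.re, z.im, rfl⟩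
  · rintro ⟨s, t, rfl⟩
    exact ⟨⟨s, t⟩, rfl⟩

lemma isometry_sliceEmb {J : H} (hJ : J ∈ Sph) : Isometry (sliceEmb hJ) :=
  AddMonoidHomClass.isometry_of_norm _ (norm_sliceEmb hJ)

theorem eq_zero_of_sliceHolomorphicAt {Ω : Set H} (hΩ : IsOpen Ω) {J : H} (hJ : J ∈ Sph)
    (hcon : IsPreconnected (Ω ∩ Slice J)) {r : ℝ} (hr : (r : H) ∈ Ω) {g : ℝ × ℝ → H}
    (hg : ∀ s t : ℝ, (s : H) + t • J ∈ Ω → SliceHolomorphicAt J g (s, t))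
    (hreal : ∀ s : ℝ, g (s, 0) = 0) {x y : ℝ} (hxy : (x : H) + y • J ∈ Ω) : g (x, y) = 0 := by
  let _ := sliceNormedSpace hJ
  set U : Set ℂ := sliceEmb hJ ⁻¹' Ω
  have hUopen : IsOpen U := hΩ.preimage (isometry_sliceEmb hJ).continuous
  have hUcon : IsPreconnected U := by
    rw [(isometry_sliceEmb hJ).isEmbedding.isInducing.isPreconnected_image.symm,
      Set.image_preimage_eq_inter_range, range_sliceEmb]
    exact hcon
  have han : AnalyticOnNhd ℂ (fun w : ℂ => g (w.re, w.im)) U :=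
    DifferentiableOn.analyticOnNhd (fun z hz =>
      ((hg z.re z.im hz).differentiableAt hJ).differentiableWithinAt) hUopen
  have hfreq : ∃ᶠ z in 𝓝[≠] (r : ℂ), g (z.re, z.im) = 0 := by
    have hto : Tendsto ((↑) : ℝ → ℂ) (𝓝[≠] r) (𝓝[≠] (r : ℂ)) :=
      tendsto_nhdsWithin_of_tendsto_nhds_of_eventually_within _
        ((Complex.continuous_ofReal.tendsto r).mono_left nhdsWithin_le_nhds)
        (eventually_nhdsWithin_of_forall fun s hs => Complex.ofReal_injective.ne hs)
    exact hto.frequently (.of_forall fun s => by simpa using hreal s)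
  have hrU : (r : ℂ) ∈ U := by simpa [U, sliceEmb_apply] using hr
  exact han.eqOn_zero_of_preconnected_of_frequently_eq_zero hUcon hrU hfreq (x := ⟨x, y⟩) hxy

def sliceRestr (f : H → H) (I : H) (p : ℝ × ℝ) : H := f ((p.1 : H) + p.2 • I)

lemma HoloSlice.sliceHolomorphicAt {Ω : Set H} {f : H → H} {I : H} (hf : HoloSlice Ω f I)
    (hI : I ∈ Sph) {s t : ℝ} (hst : (s : H) + t • I ∈ Ω) :
    SliceHolomorphicAt I (sliceRestr f I) (s, t) := by
  obtain ⟨hdiff, hCR⟩ := hf s t hst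
  refine ⟨_, hdiff.hasFDerivAt, ?_⟩
  have h := congrArg (I * ·) hCR
  simp only [mul_add, ← mul_assoc, mul_self_of_mem_sph hI, neg_one_mul, mul_zero] at h
  exact (sub_eq_zero.mp (by rw [← h]; abel)).symm

/-- `b + i c` is a holomorphic stem function at `p`. -/
def IsHolomorphicStemAt (b c : ℝ × ℝ → H) (p : ℝ × ℝ) : Prop :=
  ∃ Db Dc : ℝ × ℝ →L[ℝ] H, HasFDerivAt b Db p ∧ HasFDerivAt c Dc p ∧
    Db (0, 1) = -Dc (1, 0) ∧ Dc (0, 1) = Db (1, 0)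

lemma IsHolomorphicStemAt.sliceHolomorphicAt {b c : ℝ × ℝ → H} {p : ℝ × ℝ}
    (h : IsHolomorphicStemAt b c p) {J : H} (hJ : J ∈ Sph) :
    SliceHolomorphicAt J (fun q => b q + J * c q) p := by
  obtain ⟨Db, Dc, hb, hc, hbCR, hcCR⟩ := h
  refine ⟨Db + J • Dc, hb.add (hc.const_mul J), ?_⟩
  simp only [add_apply, smul_apply, smul_eq_mul, hbCR, hcCR, mul_add, ← mul_assoc,
    mul_self_of_mem_sph hJ, neg_one_mul]
  abel

def stemEven (F : ℝ × ℝ → H) (p : ℝ × ℝ) : H := (2⁻¹ : ℝ) • (F p + F (p.1, -p.2))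

/-- `I⁻¹` times the odd part of `F` in `y`, so that `F = stemEven F + I * stemOdd I F`. -/
def stemOdd (I : H) (F : ℝ × ℝ → H) (p : ℝ × ℝ) : H := (2⁻¹ : ℝ) • (I * (F (p.1, -p.2) - F p))

lemma hasFDerivAt_comp_reflect {E : Type*} [NormedAddCommGroup E] [NormedSpace ℝ E]
    {F : ℝ × ℝ → E} {D : ℝ × ℝ →L[ℝ] E} {s t : ℝ}
    (hF : HasFDerivAt F D (s, -t)) :
    HasFDerivAt (fun p : ℝ × ℝ => F (p.1, -p.2))
      (D.comp ((ContinuousLinearMap.fst ℝ ℝ ℝ).prod (-ContinuousLinearMap.snd ℝ ℝ ℝ))) (s, t) :=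
  hF.comp (s, t) (hasFDerivAt_fst.prodMk hasFDerivAt_snd.neg)

lemma isHolomorphicStemAt_stem {I : H} (hI : I ∈ Sph) {F : ℝ × ℝ → H} {s t : ℝ}
    (h₁ : SliceHolomorphicAt I F (s, t)) (h₂ : SliceHolomorphicAt I F (s, -t)) :
    IsHolomorphicStemAt (stemEven F) (stemOdd I F) (s, t) := by
  obtain ⟨D₁, hD₁, hCR₁⟩ := h₁
  obtain ⟨D₂, hD₂, hCR₂⟩ := h₂
  have hG := hasFDerivAt_comp_reflect hD₂
  have hD₂neg : D₂ (0, -1) = -(I * D₂ (1, 0)) := by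
    rw [← hCR₂, ← map_neg, Prod.neg_mk, neg_zero]
  refine ⟨_, _, (hD₁.add hG).const_smul (2⁻¹ : ℝ), ((hG.sub hD₁).const_mul I).const_smul (2⁻¹ : ℝ),
    ?_, ?_⟩
  all_goals
    simp only [smul_apply, add_apply, sub_apply, neg_apply, ContinuousLinearMap.comp_apply,
      ContinuousLinearMap.prod_apply, ContinuousLinearMap.coe_fst', ContinuousLinearMap.coe_snd',
      smul_eq_mul, neg_zero, hCR₁, hD₂neg, mul_sub, mul_neg, ← mul_assoc,
      mul_self_of_mem_sph hI, neg_one_mul]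
    module

theorem sliceRestr_eq_stem {Ω : Set H} (hΩ : IsOpen Ω) (hsymm : AxSymm Ω) {f : H → H}
    (hf : SliceRegular Ω f) {I J : H} (hI : I ∈ Sph) (hJ : J ∈ Sph)
    (hcon : IsPreconnected (Ω ∩ Slice J)) {r : ℝ} (hr : (r : H) ∈ Ω) {x y : ℝ}
    (hxy : (x : H) + y • J ∈ Ω) :
    f ((x : H) + y • J) =
      stemEven (sliceRestr f I) (x, y) + J * stemOdd I (sliceRestr f I) (x, y) := by
  rw [← sub_eq_zero]
  refine eq_zero_of_sliceHolomorphicAt hΩ hJ hcon hr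
    (g := sliceRestr f J - fun p => stemEven (sliceRestr f I) p + J * stemOdd I (sliceRestr f I) p)
    (fun s t hst => ?_) (fun s => ?_) hxy
  · have h₁ : (s : H) + t • I ∈ Ω := hsymm s t J hJ hst I hI
    have h₂ : (s : H) + (-t) • I ∈ Ω := by
      simpa [smul_neg] using hsymm s t J hJ hst (-I) (neg_mem_sph hI)
    exact ((hf J hJ).sliceHolomorphicAt hJ hst).sub
      ((isHolomorphicStemAt_stem hI ((hf I hI).sliceHolomorphicAt hI h₁)
        ((hf I hI).sliceHolomorphicAt hI h₂)).sliceHolomorphicAt hJ)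
  · simp only [Pi.sub_apply, sliceRestr, stemEven, stemOdd, neg_zero, zero_smul, add_zero,
      sub_self, mul_zero, smul_zero]
    module

/-- Representation formula: on each sphere `x + y𝕊 ⊂ Ω`,
`I ↦ f(x + yI)` is affine: `f(x+yI) = b + I c`. -/
theorem representation_formula (Ω : Set H) (hΩ : IsSymmSliceDomain Ω)
    (f : H → H) (hf : SliceRegular Ω f) (x y : ℝ) (hs : sphSet x y ⊆ Ω) :
    ∃ b c : H, ∀ I ∈ Sph, f ((x : H) + y • I) = b + I * c := by
  obtain ⟨⟨hopen, -, ⟨-, hrΩ, r, rfl⟩, hslices⟩, hsymm⟩ := hΩ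
  obtain ⟨I, hI⟩ := sph_nonempty
  exact ⟨_, _, fun J hJ => sliceRestr_eq_stem hopen hsymm hf hI hJ (hslices J hJ).isPreconnected
    hrΩ (hs ⟨J, hJ, rfl⟩)⟩
end
end

section
/- (Identity Principle) Let Ω ⊆ ℍ be a slice domain and f, g : Ω → ℍ slice regular functions. If f and g coincide on a subset C of Ω ∩ L_I for some I ∈ S, and C has an accumulation point in Ω ∩ L_I, then f ≡ g on all of Ω. -/
/-!
Identify the slice `L_I` with `ℂ` and let `ℂ` act on `ℍ` by left multiplication through `L_I`.
The Cauchy–Riemann equation `∂f/∂x + I ∂f/∂y = 0` says precisely that `z ↦ f(z.re + z.im I)` is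
a `ℂ`-differentiable `ℍ`-valued function, so the one-variable identity theorem applies on the
connected slice `Ω ∩ L_I`. Thus `f = g` on `Ω ∩ L_I`, in particular on the real points of `Ω`.
These form a nonempty open subset of `ℝ`, which lies in every slice and accumulates there, so the
same argument gives `f = g` on every `Ω ∩ L_J`, and these slices cover `Ω`.
-/

noncomputable section

open Set Filter Topology

theorem mem_Sph_iff {I : H} : I ∈ Sph ↔ I.re = 0 ∧ Quaternion.normSq I = 1 := by
  refine ⟨fun hI => ?_, fun ⟨hre, hn⟩ => ?_⟩
  · have hn : Quaternion.normSq I = 1 := by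
      have h := congrArg Quaternion.normSq (show I ^ 2 = -1 from hI)
      rw [map_pow, Quaternion.normSq_neg, map_one] at h
      nlinarith [Quaternion.normSq_nonneg (a := I)]
    exact ⟨Quaternion.sq_eq_neg_normSq.1 (by rw [hn]; exact hI), hn⟩
  · show I ^ 2 = -1
    rw [Quaternion.sq_eq_neg_normSq.2 hre, hn, Quaternion.coe_one]

theorem exists_mem_Sph_mem_Slice (q : H) : ∃ J ∈ Sph, q ∈ Slice J := by
  by_cases him : q.im = 0
  · obtain ⟨J, hJ⟩ : ∃ J : H, J ∈ Sph :=
      ⟨⟨0, 1, 0, 0⟩, mem_Sph_iff.2 ⟨rfl, (Quaternion.normSq_def' _).trans (by norm_num)⟩⟩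
    refine ⟨J, hJ, q.re, 0, ?_⟩
    rw [zero_smul, add_zero]
    nth_rewrite 1 [← q.re_add_im]
    rw [him, add_zero]
  · have hnorm : ‖q.im‖ ≠ 0 := norm_ne_zero_iff.2 him
    refine ⟨‖q.im‖⁻¹ • q.im, mem_Sph_iff.2 ⟨by simp, ?_⟩, q.re, ‖q.im‖, ?_⟩
    · rw [Quaternion.normSq_smul, Quaternion.normSq_eq_norm_mul_self]
      field_simp
    · rw [smul_smul, mul_inv_cancel₀ hnorm, one_smul, q.re_add_im]

theorem mul_self_eq_neg_one_of_mem_Sph {I : H} (hI : I ∈ Sph) : I * I = -1 := by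
  rw [← sq]; exact hI

def sliceEmbedding (I : H) (hI : I ∈ Sph) : ℂ →ₐ[ℝ] H :=
  Complex.liftAux I (mul_self_eq_neg_one_of_mem_Sph hI)

section sliceEmbedding

variable {I : H} (hI : I ∈ Sph)

theorem sliceEmbedding_apply (z : ℂ) : sliceEmbedding I hI z = (z.re : H) + z.im • I :=
  Complex.liftAux_apply _ _ z

theorem sliceEmbedding_I : sliceEmbedding I hI Complex.I = I :=
  Complex.liftAux_apply_I _ _

theorem range_sliceEmbedding : range (sliceEmbedding I hI) = Slice I := by
  ext q
  simp only [mem_range, sliceEmbedding_apply, Slice, mem_ofPred_eq]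
  exact ⟨fun ⟨z, hz⟩ => ⟨z.re, z.im, hz.symm⟩, fun ⟨x, y, hq⟩ => ⟨⟨x, y⟩, hq.symm⟩⟩

theorem norm_sliceEmbedding (z : ℂ) : ‖sliceEmbedding I hI z‖ = ‖z‖ := by
  obtain ⟨hre, hn⟩ := mem_Sph_iff.1 hI
  have hsq : Quaternion.normSq (sliceEmbedding I hI z) = Complex.normSq z := by
    rw [sliceEmbedding_apply, Quaternion.normSq_add, Quaternion.normSq_smul, hn]
    simp [Quaternion.normSq_def', hre, Complex.normSq_apply]
    ring
  rw [Quaternion.normSq_eq_norm_mul_self, Complex.normSq_eq_norm_sq] at hsq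
  nlinarith [norm_nonneg z, norm_nonneg (sliceEmbedding I hI z)]

theorem isometry_sliceEmbedding : Isometry (sliceEmbedding I hI) :=
  AddMonoidHomClass.isometry_of_norm _ (norm_sliceEmbedding hI)

end sliceEmbedding

theorem Topology.IsEmbedding.accPt_image_iff {X Y : Type*} [TopologicalSpace X]
    [TopologicalSpace Y] {e : X → Y} (he : IsEmbedding e) {x : X} {s : Set X} :
    AccPt (e x) (𝓟 (e '' s)) ↔ AccPt x (𝓟 s) := by
  rw [accPt_principal_iff_nhdsWithin, accPt_principal_iff_nhdsWithin, ← image_singleton,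
    ← image_sdiff he.injective, ← he.map_nhdsWithin_eq, map_neBot_iff]

theorem accPt_of_mem_nhds {X : Type*} [TopologicalSpace X] {x : X} [(𝓝[≠] x).NeBot]
    {U : Set X} (hU : U ∈ 𝓝 x) : AccPt x (𝓟 U) :=
  accPt_iff_frequently_nhdsNE.2 (eventually_nhdsWithin_of_eventually_nhds hU).frequently

theorem differentiableAt_of_hasFDerivAt_of_cauchyRiemann {E : Type*} [NormedAddCommGroup E]
    [NormedSpace ℝ E] [NormedSpace ℂ E] [IsScalarTower ℝ ℂ E] {F : ℂ → E} {L : ℂ →L[ℝ] E}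
    {z : ℂ} (hF : HasFDerivAt F L z) (hCR : L Complex.I = Complex.I • L 1) :
    DifferentiableAt ℂ F z := by
  refine (hasFDerivAt_of_restrictScalars ℝ hF
    (f' := (1 : ℂ →L[ℂ] ℂ).smulRight (L 1)) ?_).differentiableAt
  ext w
  have hw : w = w.re • (1 : ℂ) + w.im • Complex.I := by simp
  symm
  calc L w = L (w.re • (1 : ℂ) + w.im • Complex.I) := by rw [← hw]
    _ = ((w.re : ℂ) + w.im * Complex.I) • L 1 := by
      rw [map_add, map_smul, map_smul, hCR, RCLike.real_smul_eq_coe_smul (K := ℂ),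
        RCLike.real_smul_eq_coe_smul (K := ℂ) w.im, smul_smul, ← add_smul]
      rfl
    _ = w • L 1 := by rw [Complex.re_add_im]

theorem HoloSlice.hasFDerivAt_comp_sliceEmbedding {Ω : Set H} {f : H → H} {I : H}
    (hI : I ∈ Sph) (hf : HoloSlice Ω f I) {z : ℂ} (hz : sliceEmbedding I hI z ∈ Ω) :
    ∃ L : ℂ →L[ℝ] H, HasFDerivAt (f ∘ sliceEmbedding I hI) L z ∧ L Complex.I = I * L 1 := by
  obtain ⟨hd, hCR⟩ := hf z.re z.im (by rwa [← sliceEmbedding_apply hI])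
  have hcomp : f ∘ sliceEmbedding I hI =
      (fun p : ℝ × ℝ => f ((p.1 : H) + p.2 • I)) ∘ Complex.equivRealProdCLM := by
    funext w; simp [sliceEmbedding_apply]
  refine ⟨_, hcomp ▸ hd.hasFDerivAt.comp z Complex.equivRealProdCLM.hasFDerivAt, ?_⟩
  generalize fderiv ℝ (fun p : ℝ × ℝ => f ((p.1 : H) + p.2 • I)) (z.re, z.im) = D at hCR ⊢
  change D (0, 1) = I * D (1, 0)
  rw [eq_neg_of_add_eq_zero_left hCR, mul_neg, ← mul_assoc, mul_self_eq_neg_one_of_mem_Sph hI,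
    neg_one_mul, neg_neg]

theorem eqOn_slice_of_accPt {Ω : Set H} {f g : H → H} {I : H} (hI : I ∈ Sph) (hΩ : IsOpen Ω)
    (hconn : IsPreconnected (Ω ∩ Slice I)) (hf : HoloSlice Ω f I) (hg : HoloSlice Ω g I)
    {C : Set H} (hC : C ⊆ Slice I) (heq : EqOn f g C) {p : H} (hp : p ∈ Ω ∩ Slice I)
    (hacc : AccPt p (𝓟 C)) : EqOn f g (Ω ∩ Slice I) := by
  set ι := sliceEmbedding I hI
  let _ : Module ℂ H := Module.compHom H ι.toRingHom
  let _ : NormedSpace ℂ H := ⟨fun z q => by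
    rw [show z • q = ι z * q from rfl, norm_mul, norm_sliceEmbedding]⟩
  have : IsScalarTower ℝ ℂ H := ⟨fun r z q => by
    show ι (r • z) * q = r • (ι z * q)
    rw [map_smul, smul_mul_assoc]⟩
  have hol (h : H → H) (hh : HoloSlice Ω h I) : DifferentiableOn ℂ (h ∘ ι) (ι ⁻¹' Ω) := by
    intro z hz
    obtain ⟨L, hL, hCR⟩ := hh.hasFDerivAt_comp_sliceEmbedding hI hz
    refine (differentiableAt_of_hasFDerivAt_of_cauchyRiemann hL ?_).differentiableWithinAt
    rwa [show Complex.I • L 1 = ι Complex.I * L 1 from rfl, sliceEmbedding_I]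
  have he := (isometry_sliceEmbedding hI).isEmbedding
  have hrange := range_sliceEmbedding hI
  have hU : IsOpen (ι ⁻¹' Ω) := hΩ.preimage he.continuous
  have hUconn : IsPreconnected (ι ⁻¹' Ω) := by
    rwa [← he.isInducing.isPreconnected_image, image_preimage_eq_inter_range, hrange]
  obtain ⟨z₀, rfl⟩ : p ∈ range ι := hrange ▸ hp.2
  have hfreq : ∃ᶠ z in 𝓝[≠] z₀, (f ∘ ι) z = (g ∘ ι) z := by
    rw [← image_preimage_eq_of_subset (f := ι) (s := C) (hrange ▸ hC), he.accPt_image_iff] at hacc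
    exact (accPt_iff_frequently_nhdsNE.1 hacc).mono fun z hz => heq hz
  have hfg := ((hol f hf).analyticOnNhd hU).eqOn_of_preconnected_of_frequently_eq
    ((hol g hg).analyticOnNhd hU) hUconn hp.1 hfreq
  rintro q ⟨hqΩ, hq⟩
  obtain ⟨z, rfl⟩ := hrange ▸ hq
  exact hfg hqΩ

theorem realAxis_subset_Slice (I : H) : realAxis ⊆ Slice I := by
  rintro _ ⟨r, rfl⟩
  exact ⟨r, 0, by simp⟩

theorem accPt_inter_realAxis {Ω : Set H} (hΩ : IsOpen Ω) {r : ℝ} (hr : (r : H) ∈ Ω) :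
    AccPt (r : H) (𝓟 (Ω ∩ realAxis)) := by
  have he : IsEmbedding ((↑) : ℝ → H) := (Isometry.of_dist_eq fun x y => by
    rw [dist_eq_norm, dist_eq_norm, ← Quaternion.coe_sub, Quaternion.norm_coe]).isEmbedding
  have hreal : Ω ∩ realAxis = (↑) '' ((↑) ⁻¹' Ω : Set ℝ) := by
    rw [image_preimage_eq_inter_range]
    congr 1
    ext q
    exact exists_congr fun _ => eq_comm
  rw [hreal, he.accPt_image_iff]
  exact accPt_of_mem_nhds ((hΩ.preimage he.continuous).mem_nhds hr)

open Filter in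
/-- Identity Principle: if two slice regular functions on a
slice domain coincide on a subset of a slice having an accumulation point in
that slice, they coincide on all of `Ω`. -/
theorem identity_principle (Ω : Set H) (hΩ : IsSliceDomain Ω)
    (f g : H → H) (hf : SliceRegular Ω f) (hg : SliceRegular Ω g)
    (I : H) (hI : I ∈ Sph) (C : Set H) (hC : C ⊆ Ω ∩ Slice I)
    (heq : ∀ q ∈ C, f q = g q)
    (p : H) (hp : p ∈ Ω ∩ Slice I) (hacc : AccPt p (𝓟 C)) :
    Set.EqOn f g Ω := by
  obtain ⟨hΩo, -, ⟨_, hr, r, rfl⟩, hslices⟩ := hΩ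
  have hslice (J : H) (hJ : J ∈ Sph) {D : Set H} (hD : D ⊆ Slice J) (hDeq : EqOn f g D) {x : H}
      (hx : x ∈ Ω ∩ Slice J) (hxD : AccPt x (𝓟 D)) : EqOn f g (Ω ∩ Slice J) :=
    eqOn_slice_of_accPt hJ hΩo (hslices J hJ).isPreconnected (hf J hJ) (hg J hJ) hD hDeq hx hxD
  have hsliceI : EqOn f g (Ω ∩ Slice I) := hslice I hI (fun q hq => (hC hq).2) heq hp hacc
  have hreal : EqOn f g (Ω ∩ realAxis) := fun q hq =>
    hsliceI ⟨hq.1, realAxis_subset_Slice I hq.2⟩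
  intro q hq
  obtain ⟨J, hJ, hqJ⟩ := exists_mem_Sph_mem_Slice q
  exact hslice J hJ (inter_subset_right.trans (realAxis_subset_Slice J)) hreal
    ⟨hr, realAxis_subset_Slice J ⟨r, rfl⟩⟩ (accPt_inter_realAxis hΩo hr) ⟨hq, hqJ⟩
end
end
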